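/- Let μ ∈ ℝ, σ² > 0, b > 0, and let ν(v) = ∫_0^∞ (2πgσ²)^{−1/2} exp(−(v − gμ)²/(2gσ²)) · b e^{−bg} dg/g for v ≠ 0. Then ν(v) = (b/|v|) exp{(μ v − |v|(2bσ² + μ²)^{1/2})/σ²}. -/

import Mathlib

/-!
Completing the square in the exponent turns the integrand into a constant multiple of
`g ^ (-3/2) * exp (-α g - β / g)` with `α = b + μ² / (2σ²)` and `β = v² / (2σ²)`, and the
substitution `g = β / u²` reduces that integral to `∫₀^∞ exp (-u² - αβ / u²) du`.
For the latter, put `c = √(αβ)`: the integrand `f` is invariant under `u ↦ c / u`, so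
`∫ f = ∫ (c / u²) f`, while the substitution `x = u - c / u` gives
`∫ (1 + c / u²) f = exp (-2c) ∫_ℝ exp (-x²) = exp (-2c) √π`.
-/

open MeasureTheory Real Set

lemma hasDerivAt_const_div_pow (c : ℝ) (n : ℕ) {t : ℝ} (ht : t ≠ 0) :
    HasDerivAt (fun t : ℝ => c / t ^ n) (-(n * c / t ^ (n + 1))) t := by
  have h : HasDerivAt (fun t : ℝ => c * (t ^ n)⁻¹) (c * (-(n * t ^ (n - 1)) / (t ^ n) ^ 2)) t :=
    ((hasDerivAt_pow n t).inv (pow_ne_zero n ht)).const_mul c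
  simp only [← div_eq_mul_inv] at h
  convert h using 1
  rcases n with _ | n
  · simp
  · simp only [Nat.cast_add, Nat.cast_one, add_tsub_cancel_right]
    field_simp
    ring

lemma injOn_const_div_pow {c : ℝ} (hc : c ≠ 0) {n : ℕ} (hn : n ≠ 0) :
    InjOn (fun t : ℝ => c / t ^ n) (Ioi 0) := by
  intro s (hs : 0 < s) t (ht : 0 < t) hst
  have hst' : s ^ n = t ^ n := by
    rw [div_eq_div_iff (by positivity) (by positivity)] at hst
    exact (mul_left_cancel₀ hc hst).symm
  exact (pow_left_inj₀ hs.le ht.le hn).1 hst'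

lemma image_const_div_pow_Ioi {c : ℝ} (hc : 0 < c) {n : ℕ} (hn : n ≠ 0) :
    (fun t : ℝ => c / t ^ n) '' Ioi 0 = Ioi 0 := by
  refine Subset.antisymm (image_subset_iff.2 fun t (ht : 0 < t) => ?_)
    fun y (hy : 0 < y) => ⟨(c / y) ^ (n⁻¹ : ℝ), by simp only [mem_Ioi]; positivity, ?_⟩
  · simp only [mem_preimage, mem_Ioi]; positivity
  · simp only
    rw [rpow_inv_natCast_pow (by positivity) hn]
    field_simp

lemma hasDerivAt_sub_const_div (c : ℝ) {t : ℝ} (ht : t ≠ 0) :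
    HasDerivAt (fun t : ℝ => t - c / t) (1 + c / t ^ 2) t := by
  have h := (hasDerivAt_id' t).sub (hasDerivAt_const_div_pow c 1 ht)
  simp only [pow_one, Nat.cast_one, one_mul, sub_neg_eq_add] at h
  exact h

lemma strictMonoOn_sub_const_div {c : ℝ} (hc : 0 ≤ c) :
    StrictMonoOn (fun t : ℝ => t - c / t) (Ioi 0) := by
  intro s (hs : 0 < s) t (ht : 0 < t) hst
  have : c / t ≤ c / s := div_le_div_of_nonneg_left hc hs hst.le
  simp only
  linarith

lemma image_sub_const_div_Ioi {c : ℝ} (hc : 0 < c) :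
    (fun t : ℝ => t - c / t) '' Ioi 0 = univ := by
  refine eq_univ_of_forall fun y => ?_
  -- the positive root of `t ^ 2 - y t - c = 0`
  set s := √(y ^ 2 + 4 * c)
  have hs : s ^ 2 = y ^ 2 + 4 * c := sq_sqrt (by positivity)
  have hys : |y| < s := by
    rw [← sqrt_sq_eq_abs]; exact sqrt_lt_sqrt (sq_nonneg _) (by linarith)
  have ht : 0 < y + s := by linarith [neg_abs_le y]
  refine ⟨(y + s) / 2, half_pos ht, ?_⟩
  field_simp
  linear_combination hs

section Substitution

variable {E : Type*} [NormedAddCommGroup E] [NormedSpace ℝ E]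

theorem integral_comp_const_div_pow_Ioi (f : ℝ → E) {c : ℝ} (hc : 0 < c) {n : ℕ} (hn : n ≠ 0) :
    ∫ t in Ioi 0, (n * c / t ^ (n + 1)) • f (c / t ^ n) = ∫ t in Ioi 0, f t := by
  have h := integral_image_eq_integral_abs_deriv_smul measurableSet_Ioi
    (fun t (ht : 0 < t) => (hasDerivAt_const_div_pow c n ht.ne').hasDerivWithinAt)
    (injOn_const_div_pow hc.ne' hn) f
  rw [image_const_div_pow_Ioi hc hn] at h
  rw [h]
  refine setIntegral_congr_fun measurableSet_Ioi fun t (ht : 0 < t) => ?_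
  rw [abs_neg, abs_of_pos (by positivity)]

theorem integrableOn_comp_const_div_pow_Ioi_iff (f : ℝ → E) {c : ℝ} (hc : 0 < c) {n : ℕ}
    (hn : n ≠ 0) :
    IntegrableOn (fun t => (n * c / t ^ (n + 1)) • f (c / t ^ n)) (Ioi 0) ↔
      IntegrableOn f (Ioi 0) := by
  have h := integrableOn_image_iff_integrableOn_abs_deriv_smul measurableSet_Ioi
    (fun t (ht : 0 < t) => (hasDerivAt_const_div_pow c n ht.ne').hasDerivWithinAt)
    (injOn_const_div_pow hc.ne' hn) f
  rw [image_const_div_pow_Ioi hc hn] at h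
  rw [h]
  refine integrableOn_congr_fun (fun t (ht : 0 < t) => ?_) measurableSet_Ioi
  rw [abs_neg, abs_of_pos (by positivity)]

theorem integral_comp_sub_const_div_Ioi (f : ℝ → E) {c : ℝ} (hc : 0 < c) :
    ∫ t in Ioi 0, (1 + c / t ^ 2) • f (t - c / t) = ∫ u, f u := by
  have h := integral_image_eq_integral_abs_deriv_smul measurableSet_Ioi
    (fun t (ht : 0 < t) => (hasDerivAt_sub_const_div c ht.ne').hasDerivWithinAt)
    (strictMonoOn_sub_const_div hc.le).injOn f
  rw [image_sub_const_div_Ioi hc, setIntegral_univ] at h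
  rw [h]
  refine setIntegral_congr_fun measurableSet_Ioi fun t (ht : 0 < t) => ?_
  rw [abs_of_pos (by positivity)]

end Substitution

lemma integrableOn_exp_neg_sq_sub_div_sq {β : ℝ} (hβ : 0 ≤ β) :
    IntegrableOn (fun t : ℝ => exp (-t ^ 2 - β / t ^ 2)) (Ioi 0) := by
  refine ((integrable_exp_neg_mul_sq one_pos).integrableOn).mono' (by fun_prop) ?_
  filter_upwards [ae_restrict_mem measurableSet_Ioi] with t ht
  rw [norm_of_nonneg (exp_pos _).le, exp_le_exp]
  have : 0 ≤ β / t ^ 2 := by positivity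
  linarith

theorem integral_exp_neg_sq_sub_div_sq {β : ℝ} (hβ : 0 < β) :
    ∫ t in Ioi 0, exp (-t ^ 2 - β / t ^ 2) = √π / 2 * exp (-2 * √β) := by
  obtain ⟨c, hc, rfl⟩ : ∃ c > 0, c ^ 2 = β := ⟨√β, sqrt_pos.2 hβ, sq_sqrt hβ.le⟩
  set f := fun t : ℝ => exp (-t ^ 2 - c ^ 2 / t ^ 2)
  have hf : IntegrableOn f (Ioi 0) := integrableOn_exp_neg_sq_sub_div_sq (sq_nonneg c)
  have hinv : ∀ t ∈ Ioi (0 : ℝ), (1 * c / t ^ (1 + 1)) • f (c / t ^ 1) = c / t ^ 2 * f t := by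
    intro t (ht : 0 < t)
    simp only [f, smul_eq_mul, one_mul, pow_one]
    congr 2
    field_simp
    ring
  have hwf : IntegrableOn (fun t => c / t ^ 2 * f t) (Ioi 0) := by
    have := (integrableOn_comp_const_div_pow_Ioi_iff f hc one_ne_zero).2 hf
    exact (integrableOn_congr_fun hinv measurableSet_Ioi).1 (by exact_mod_cast this)
  have hwf_eq : ∫ t in Ioi 0, c / t ^ 2 * f t = ∫ t in Ioi 0, f t := by
    rw [← setIntegral_congr_fun measurableSet_Ioi hinv]
    exact_mod_cast integral_comp_const_div_pow_Ioi f hc one_ne_zero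
  have hshift : ∀ t ∈ Ioi (0 : ℝ), (1 + c / t ^ 2) • exp (-(t - c / t) ^ 2)
      = exp (2 * c) * (f t + c / t ^ 2 * f t) := by
    intro t (ht : 0 < t)
    have hexp : exp (-(t - c / t) ^ 2) = exp (2 * c) * f t := by
      rw [← exp_add]
      congr 1
      field_simp
      ring
    rw [smul_eq_mul, hexp]
    ring
  have hgauss : √π = exp (2 * c) * (2 * ∫ t in Ioi 0, f t) := by
    calc √π = ∫ u, exp (-u ^ 2) := by simpa using (integral_gaussian 1).symm
      _ = exp (2 * c) * ((∫ t in Ioi 0, f t) + ∫ t in Ioi 0, c / t ^ 2 * f t) := by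
        rw [← integral_comp_sub_const_div_Ioi (fun u => exp (-u ^ 2)) hc,
          setIntegral_congr_fun measurableSet_Ioi hshift, integral_const_mul, integral_add hf hwf]
      _ = exp (2 * c) * (2 * ∫ t in Ioi 0, f t) := by rw [hwf_eq]; ring
  rw [hgauss, sqrt_sq hc.le, neg_mul, exp_neg]
  field_simp

theorem integral_exp_neg_mul_sub_div_div_mul_sqrt {α β : ℝ} (hα : 0 < α) (hβ : 0 < β) :
    ∫ g in Ioi 0, exp (-(α * g) - β / g) / (g * √g) = √(π / β) * exp (-2 * √(α * β)) := by
  have hsub : ∀ u ∈ Ioi (0 : ℝ),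
      ((2 : ℕ) * β / u ^ (2 + 1)) • (exp (-(α * (β / u ^ 2)) - β / (β / u ^ 2))
        / (β / u ^ 2 * √(β / u ^ 2))) = 2 / √β * exp (-u ^ 2 - α * β / u ^ 2) := by
    intro u (hu : 0 < u)
    have hsqrt : √(β / u ^ 2) = √β / u := by rw [sqrt_div' _ (sq_nonneg u), sqrt_sq hu.le]
    rw [smul_eq_mul, hsqrt]
    field_simp
    ring_nf
  rw [← integral_comp_const_div_pow_Ioi _ hβ two_ne_zero,
    setIntegral_congr_fun measurableSet_Ioi hsub, integral_const_mul,
    integral_exp_neg_sq_sub_div_sq (by positivity), sqrt_div' _ hβ.le]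
  field_simp

lemma variance_gamma_integrand_eq (mu sigma2 b v : ℝ) (hsigma : 0 < sigma2) {g : ℝ}
    (hg : 0 < g) :
    (2 * π * g * sigma2) ^ (-(1:ℝ)/2) * exp (-(v - g * mu) ^ 2 / (2 * g * sigma2))
        * b * exp (-b * g) / g
      = b * exp (mu * v / sigma2) / √(2 * π * sigma2)
        * (exp (-((b + mu ^ 2 / (2 * sigma2)) * g) - v ^ 2 / (2 * sigma2) / g) / (g * √g)) := by
  have hrpow : (2 * π * g * sigma2) ^ (-(1:ℝ)/2) = (√(2 * π * sigma2) * √g)⁻¹ := by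
    rw [← sqrt_mul (by positivity), neg_div, rpow_neg (by positivity), ← sqrt_eq_rpow]
    ring_nf
  have hexp : exp (-(v - g * mu) ^ 2 / (2 * g * sigma2)) * exp (-b * g)
      = exp (mu * v / sigma2)
        * exp (-((b + mu ^ 2 / (2 * sigma2)) * g) - v ^ 2 / (2 * sigma2) / g) := by
    rw [← exp_add, ← exp_add]
    congr 1
    field_simp
    ring
  calc _ = b / (√(2 * π * sigma2) * √g * g)
          * (exp (-(v - g * mu) ^ 2 / (2 * g * sigma2)) * exp (-b * g)) := by
        rw [hrpow]; ring
    _ = _ := by rw [hexp]; field_simp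

theorem stmt_17 (mu sigma2 b v : ℝ) (hsigma : 0 < sigma2) (hb : 0 < b) (hv : v ≠ 0) :
    ∫ g in Set.Ioi (0 : ℝ),
        (2 * π * g * sigma2) ^ (-(1:ℝ)/2) * Real.exp (-(v - g * mu) ^ 2 / (2 * g * sigma2))
          * b * Real.exp (-b * g) / g
      = (b / |v|) * Real.exp ((mu * v - |v| * Real.sqrt (2 * b * sigma2 + mu ^ 2)) / sigma2) := by
  rw [setIntegral_congr_fun measurableSet_Ioi
      fun g hg => variance_gamma_integrand_eq mu sigma2 b v hsigma hg,
    integral_const_mul, integral_exp_neg_mul_sub_div_div_mul_sqrt (by positivity) (by positivity)]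
  have hscale : √(π / (v ^ 2 / (2 * sigma2))) = √(2 * π * sigma2) / |v| := by
    rw [← sqrt_sq_eq_abs, ← sqrt_div' _ (sq_nonneg v)]
    congr 1
    field_simp
  have hrate : √((b + mu ^ 2 / (2 * sigma2)) * (v ^ 2 / (2 * sigma2)))
      = |v| * √(2 * b * sigma2 + mu ^ 2) / (2 * sigma2) := by
    rw [← sqrt_sq (by positivity : 0 ≤ |v| * √(2 * b * sigma2 + mu ^ 2) / (2 * sigma2)),
      div_pow, mul_pow, sq_abs, sq_sqrt (by positivity)]
    congr 1
    field_simp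
  have hexp : exp ((mu * v - |v| * √(2 * b * sigma2 + mu ^ 2)) / sigma2)
      = exp (mu * v / sigma2) * exp (-2 * (|v| * √(2 * b * sigma2 + mu ^ 2) / (2 * sigma2))) := by
    rw [← exp_add]
    congr 1
    field_simp
    ring
  rw [hscale, hrate, hexp]
  field_simp
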